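/- For each fixed positive integer n and each fixed positive rational number r, the set of n-tuples (x_1, ..., x_n) of positive integers satisfying ∑_{i=1}^n 1/x_i = r is finite. -/
import Mathlib

theorem landau_aux : ∀ m : ℕ, ∀ r : ℚ, 0 < r →
    {x : Fin (m+1) → ℕ | (∀ i, 0 < x i) ∧ ∑ i, (1 : ℚ) / (x i) = r}.Finite := by
  intro m
  induction m with
  | zero =>
    intro r hr
    apply Set.Finite.subset (Set.finite_singleton (fun _ : Fin 1 => (r⁻¹.num).toNat))
    rintro x ⟨hpos, hsum⟩
    rw [Fin.sum_univ_one] at hsum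
    have hx0 : (0:ℚ) < x 0 := by exact_mod_cast hpos 0
    have hinv : r⁻¹ = (x 0 : ℚ) := by
      rw [← hsum]; field_simp
    have : r⁻¹.num.toNat = x 0 := by
      rw [hinv]; simp
    simp only [Set.mem_singleton_iff]
    funext i
    have : i = 0 := Subsingleton.elim i 0
    subst this
    rw [← ‹r⁻¹.num.toNat = x 0›]
  | succ m ih =>
    intro r hr
    set N := ⌈((m+2 : ℚ))/r⌉₊ with hN
    have hfin : ∀ i : Fin (m+2), ∀ k : ℕ,
        {x : Fin (m+2) → ℕ | ((∀ j, 0 < x j) ∧ ∑ j, (1 : ℚ) / (x j) = r) ∧ x i = k}.Finite := by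
      intro i k
      by_cases hk : (1:ℚ)/k < r
      · have hpos' : 0 < r - 1/k := by linarith
        apply Set.Finite.subset (((ih (r - 1/k) hpos').image (fun y => i.insertNth k y)))
        rintro x ⟨⟨hpos, hsum⟩, hxi⟩
        refine ⟨i.removeNth x, ⟨fun j => hpos _, ?_⟩, ?_⟩
        · have := Fin.sum_univ_succAbove (fun j => (1:ℚ)/(x j)) i
          rw [this] at hsum
          rw [hxi] at hsum
          have : ∑ j, (1:ℚ) / (x (i.succAbove j)) = r - 1/k := by linarith
          simpa [Fin.removeNth] using this
        · rw [← hxi]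
          exact Fin.insertNth_self_removeNth i x
      · apply Set.Finite.subset Set.finite_empty
        rintro x ⟨⟨hpos, hsum⟩, hxi⟩
        have := Fin.sum_univ_succAbove (fun j => (1:ℚ)/(x j)) i
        rw [this, hxi] at hsum
        have hrest : 0 < ∑ j, (1:ℚ) / (x (i.succAbove j)) := by
          apply Finset.sum_pos
          · intro j _
            have : (0:ℚ) < x (i.succAbove j) := by exact_mod_cast hpos _
            positivity
          · exact Finset.univ_nonempty
        push_neg at hk
        linarith
    apply Set.Finite.subset (Set.Finite.biUnion (Set.finite_Icc (1:ℕ) N)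
      (fun k _ => Set.Finite.biUnion (Set.finite_univ (α := Fin (m+2)))
        (fun i _ => hfin i k)))
    rintro x ⟨hpos, hsum⟩
    have hex : ∃ i : Fin (m+2), r / (m+2) ≤ (1:ℚ) / (x i) := by
      by_contra h
      push_neg at h
      have : ∑ i : Fin (m+2), (1:ℚ)/(x i) < ∑ _i : Fin (m+2), r/(m+2) := by
        apply Finset.sum_lt_sum_of_nonempty Finset.univ_nonempty
        intro i _; exact h i
      rw [hsum] at this
      simp only [Finset.sum_const, Finset.card_univ, Fintype.card_fin, nsmul_eq_mul] at this
      push_cast at this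
      rw [mul_div_cancel₀ _ (by positivity : ((m:ℚ)+2) ≠ 0)] at this
      exact lt_irrefl _ this
    obtain ⟨i, hi⟩ := hex
    have hxi0 : (0:ℚ) < x i := by exact_mod_cast hpos i
    have hle : (x i : ℚ) ≤ ((m:ℚ)+2)/r := by
      rw [div_le_div_iff₀ (by positivity) hxi0] at hi
      rw [le_div_iff₀ hr]
      nlinarith
    have hleN : x i ≤ N := by
      have h2 : ((x i):ℚ) ≤ (N:ℚ) := hle.trans (Nat.le_ceil _)
      exact_mod_cast h2
    exact Set.mem_biUnion (Set.mem_Icc.mpr ⟨hpos i, hleN⟩)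
      (Set.mem_biUnion (Set.mem_univ i) ⟨⟨hpos, hsum⟩, rfl⟩)

/-- Landau's finiteness theorem, general form: for fixed `n` and a fixed positive rational `r`,
there are finitely many `n`-tuples of positive integers `x` with `∑ i, 1 / x i = r`. -/
theorem landau_finiteness_general (n : ℕ) (hn : 1 ≤ n) (r : ℚ) (hr : 0 < r) :
    {x : Fin n → ℕ | (∀ i, 0 < x i) ∧ ∑ i, (1 : ℚ) / (x i) = r}.Finite := by
  obtain ⟨m, rfl⟩ : ∃ m, n = m + 1 := ⟨n - 1, by omega⟩
  exact landau_aux m r hr
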